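/- Let V be a vector space over ℂ, let q ≥ 1 and k ≥ 1 be integers, let ω be a nonzero alternating q-multilinear form on V with values in ℂ, and let m₁, …, m_k ∈ ℂ. Define f : V → V^k by f(v) = (m₁·v, …, m_k·v) and let ω_k be the alternating q-form on V^k given by the sum over i of the pullbacks of ω along the projections pr_i : V^k → V. Then the pullback of ω_k along f is the zero form if and only if ∑_{i=1}^k m_i^q = 0. -/

import Mathlib

/-! Composing with `pr_i ∘ f` is composing with scalar multiplication by `mᵢ`, which scales a
`q`-form by `mᵢ ^ q`; hence `f^* ω_k = (∑ i, mᵢ ^ q) • ω`, and a nonzero multiple of `ω ≠ 0`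
over a field is nonzero. -/

namespace AlternatingMap

variable {R M M₂ N ι : Type*} [CommSemiring R] [AddCommMonoid M] [Module R M]
  [AddCommMonoid M₂] [Module R M₂] [AddCommMonoid N] [Module R N]

theorem sum_compLinearMap {κ : Type*} (s : Finset κ) (f : κ → M [⋀^ι]→ₗ[R] N)
    (g : M₂ →ₗ[R] M) : (∑ i ∈ s, f i).compLinearMap g = ∑ i ∈ s, (f i).compLinearMap g :=
  map_sum ({ toFun := fun f => f.compLinearMap g
             map_zero' := zero_compLinearMap g
             map_add' := fun f₁ f₂ => add_compLinearMap f₁ f₂ g } :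
      (M [⋀^ι]→ₗ[R] N) →+ (M₂ [⋀^ι]→ₗ[R] N)) f s

theorem compLinearMap_smul_id [Fintype ι] (f : M [⋀^ι]→ₗ[R] N) (c : R) :
    f.compLinearMap (c • LinearMap.id) = c ^ Fintype.card ι • f := by
  ext v
  simpa using f.map_smul_univ (fun _ => c) v

theorem sum_compLinearMap_proj_compLinearMap_pi_smul_id [Fintype ι] {κ : Type*} [Fintype κ]
    (f : M [⋀^ι]→ₗ[R] N) (m : κ → R) :
    (∑ i, f.compLinearMap (LinearMap.proj i : (κ → M) →ₗ[R] M)).compLinearMap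
        (LinearMap.pi fun i => m i • LinearMap.id) = (∑ i, m i ^ Fintype.card ι) • f := by
  rw [sum_compLinearMap, Finset.sum_smul]
  refine Finset.sum_congr rfl fun i _ => ?_
  rw [compLinearMap_assoc, LinearMap.proj_pi, compLinearMap_smul_id]

end AlternatingMap

theorem pullback_sum_of_projections_alternating_form_eq_zero_iff_general
    (V : Type*) [AddCommGroup V] [Module ℂ V] (q k : ℕ)
    (ω : V [⋀^Fin q]→ₗ[ℂ] ℂ) (hω : ω ≠ 0) (m : Fin k → ℂ) :
    (∑ i : Fin k,
        ω.compLinearMap (LinearMap.proj i : (Fin k → V) →ₗ[ℂ] V)).compLinearMap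
        (LinearMap.pi fun i : Fin k => m i • (LinearMap.id : V →ₗ[ℂ] V)) = 0
      ↔ ∑ i : Fin k, m i ^ q = 0 := by
  rw [AlternatingMap.sum_compLinearMap_proj_compLinearMap_pi_smul_id, Fintype.card_fin,
    smul_eq_zero, or_iff_left hω]

/-- With `V`, `q, k ≥ 1`, `ω ≠ 0` an alternating `q`-form on `V`,
`m ∈ ℂ^k`, `f(v) = (m₁·v, …, m_k·v)` and `ω_k = ∑ i, pr_i^* ω`, the pullback `f^* ω_k`
is the zero form if and only if `∑ i, m_i ^ q = 0`. -/
theorem pullback_sum_of_projections_alternating_form_eq_zero_iff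
    (V : Type*) [AddCommGroup V] [Module ℂ V] (q k : ℕ) (hq : 1 ≤ q) (hk : 1 ≤ k)
    (ω : V [⋀^Fin q]→ₗ[ℂ] ℂ) (hω : ω ≠ 0) (m : Fin k → ℂ) :
    (∑ i : Fin k,
        ω.compLinearMap (LinearMap.proj i : (Fin k → V) →ₗ[ℂ] V)).compLinearMap
        (LinearMap.pi fun i : Fin k => m i • (LinearMap.id : V →ₗ[ℂ] V)) = 0
      ↔ ∑ i : Fin k, m i ^ q = 0 :=
  pullback_sum_of_projections_alternating_form_eq_zero_iff_general V q k ω hω m
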